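/- arXiv:2310.05795 — 4 statements merged into one kernel-verified Lean document; each statement's English description precedes it below -/
import Mathlib

section
/- Let S ≤ G₁ × ⋯ × Gₙ be a full subdirect product, let i ∈ I, and let J ⊆ I∖{i} be a subset with |J| ≥ 2. Then ⁅U_J(1)^{(i)}, I_J(|J|−1)^{(i)}⁆ ≤ N_J^{(i)}. -/
/-- The kernel of the projection `p_J : S → ∏_{j ∈ J} G_j`, viewed as a subgroup of the
direct product: the elements of `S` whose coordinates in `J` are all trivial. -/
def projKer {n : ℕ} (G : Fin n → Type*) [∀ i, Group (G i)]
    (S : Subgroup (∀ i, G i)) (J : Finset (Fin n)) : Subgroup (∀ i, G i) :=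
  S ⊓ ⨅ j ∈ J, (Pi.evalMonoidHom G j).ker

/-- `N_J^{(i)} = p_i (ker p_J)`, a subgroup of `G i`. -/
def NJ {n : ℕ} (G : Fin n → Type*) [∀ i, Group (G i)]
    (S : Subgroup (∀ i, G i)) (i : Fin n) (J : Finset (Fin n)) : Subgroup (G i) :=
  (projKer G S J).map (Pi.evalMonoidHom G i)

/-- `U_J(1)^{(i)}`: the subgroup of `G i` generated by `⋃_{l ∈ J} N_{{l}}^{(i)}`. -/
def UJ {n : ℕ} (G : Fin n → Type*) [∀ i, Group (G i)]
    (S : Subgroup (∀ i, G i)) (i : Fin n) (J : Finset (Fin n)) : Subgroup (G i) :=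
  ⨆ l ∈ J, NJ G S i {l}

/-- `I_J(|J| - 1)^{(i)} = ⋂_{l ∈ J} N_{J \ {l}}^{(i)}`. -/
def IJ {n : ℕ} (G : Fin n → Type*) [∀ i, Group (G i)]
    (S : Subgroup (∀ i, G i)) (i : Fin n) (J : Finset (Fin n)) : Subgroup (G i) :=
  ⨅ l ∈ J, NJ G S i (J.erase l)

/-!
Every element of `U_J(1)` is a product of elements of the `N_{{l}}`, `l ∈ J`. If `s ∈ S` is
trivial at `l` and `t ∈ S` is trivial on `J ∖ {l}`, then `⁅s, t⁆ ∈ S` is trivial on all of `J`,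
so `⁅N_{{l}}, N_{J ∖ {l}}⁆ ≤ N_J`. Since `S` is subdirect, `N_J` is normal in `G_i`, and modulo
a normal subgroup the elements commuting with a fixed subgroup form a subgroup; hence the
inclusions for the single generators `N_{{l}}` pass to their join `U_J(1)`.
-/

open scoped commutatorElement

namespace Subgroup

variable {G : Type*} [Group G]

theorem commutator_le_normal_iff (H K N : Subgroup G) [N.Normal] :
    ⁅H, K⁆ ≤ N ↔ H ≤ (centralizer (K.map (QuotientGroup.mk' N))).comap (QuotientGroup.mk' N) := by
  rw [← map_le_iff_le_comap, ← commutator_eq_bot_iff_le_centralizer, ← map_commutator,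
    map_eq_bot_iff, QuotientGroup.ker_mk']

theorem commutator_iSup₂_le {ι : Type*} {p : ι → Prop} (H : ι → Subgroup G) (K N : Subgroup G)
    [N.Normal] (h : ∀ l, p l → ⁅H l, K⁆ ≤ N) : ⁅⨆ (l) (_ : p l), H l, K⁆ ≤ N := by
  simp only [commutator_le_normal_iff, iSup₂_le_iff] at h ⊢
  exact h

end Subgroup

section SubdirectProduct

variable {n : ℕ} (G : Fin n → Type*) [∀ i, Group (G i)] (S : Subgroup (∀ i, G i))

theorem mem_projKer_iff {J : Finset (Fin n)} {s : ∀ i, G i} :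
    s ∈ projKer G S J ↔ s ∈ S ∧ ∀ j ∈ J, s j = 1 := by
  simp [projKer, Subgroup.mem_iInf]

theorem conj_mem_projKer {J : Finset (Fin n)} {u s : ∀ i, G i} (hu : u ∈ S)
    (hs : s ∈ projKer G S J) : u * s * u⁻¹ ∈ projKer G S J := by
  rw [mem_projKer_iff] at hs ⊢
  refine ⟨mul_mem (mul_mem hu hs.1) (inv_mem hu), fun j hj => ?_⟩
  simp [hs.2 j hj]

theorem commutator_projKer_le_projKer_union (K L : Finset (Fin n)) :
    ⁅projKer G S K, projKer G S L⁆ ≤ projKer G S (K ∪ L) := by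
  rw [Subgroup.commutator_le]
  intro s hs t ht
  rw [mem_projKer_iff] at hs ht ⊢
  refine ⟨S.commutator_le_self (Subgroup.commutator_mem_commutator hs.1 ht.1), ?_⟩
  intro j hj
  rcases Finset.mem_union.1 hj with hjK | hjL
  · simp [commutatorElement_def, hs.2 j hjK]
  · simp [commutatorElement_def, ht.2 j hjL]

theorem commutator_NJ_le_NJ_union (i : Fin n) (K L : Finset (Fin n)) :
    ⁅NJ G S i K, NJ G S i L⁆ ≤ NJ G S i (K ∪ L) := by
  rw [NJ, NJ, ← Subgroup.map_commutator]
  exact Subgroup.map_mono (commutator_projKer_le_projKer_union G S K L)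

theorem NJ_normal (hsubdirect : ∀ i, S.map (Pi.evalMonoidHom G i) = ⊤) (i : Fin n)
    (J : Finset (Fin n)) : (NJ G S i J).Normal := by
  constructor
  rintro _ ⟨s, hs, rfl⟩ g
  obtain ⟨u, hu, rfl⟩ : g ∈ S.map (Pi.evalMonoidHom G i) := hsubdirect i ▸ Subgroup.mem_top g
  exact ⟨u * s * u⁻¹, conj_mem_projKer G S hu hs, rfl⟩

end SubdirectProduct

theorem commutator_UJ_IJ_le_NJ_general {n : ℕ} (G : Fin n → Type*) [∀ i, Group (G i)]
    (S : Subgroup (∀ i, G i))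
    (hsubdirect : ∀ i, S.map (Pi.evalMonoidHom G i) = ⊤)
    (i : Fin n) (J : Finset (Fin n)) :
    ⁅UJ G S i J, IJ G S i J⁆ ≤ NJ G S i J := by
  have := NJ_normal G S hsubdirect i J
  refine Subgroup.commutator_iSup₂_le _ _ _ fun l hl => ?_
  calc ⁅NJ G S i {l}, IJ G S i J⁆
      ≤ ⁅NJ G S i {l}, NJ G S i (J.erase l)⁆ := Subgroup.commutator_mono le_rfl (iInf₂_le l hl)
    _ ≤ NJ G S i ({l} ∪ J.erase l) := commutator_NJ_le_NJ_union G S i {l} (J.erase l)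
    _ = NJ G S i J := by rw [← Finset.insert_eq, Finset.insert_erase hl]

/-- If `S` is a full subdirect product of `G₁ × ⋯ × Gₙ`, `i ∈ I` and
`J ⊆ I \ {i}` has at least two elements, then `⁅U_J(1)^{(i)}, I_J(|J|-1)^{(i)}⁆ ≤ N_J^{(i)}`. -/
theorem commutator_UJ_IJ_le_NJ {n : ℕ} (hn : 2 ≤ n) (G : Fin n → Type*) [∀ i, Group (G i)]
    (S : Subgroup (∀ i, G i))
    (hsubdirect : ∀ i, S.map (Pi.evalMonoidHom G i) = ⊤)
    (hfull : ∀ i, S ⊓ (MonoidHom.mulSingle G i).range ≠ ⊥)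
    (i : Fin n) (J : Finset (Fin n)) (hiJ : i ∉ J) (hJ : 2 ≤ J.card) :
    ⁅UJ G S i J, IJ G S i J⁆ ≤ NJ G S i J :=
  commutator_UJ_IJ_le_NJ_general G S hsubdirect i J
end

section
/- Let G₁,…,Gₙ be finitely generated groups such that, for each i, every nontrivial finitely generated normal subgroup P of G_i has virtually cyclic quotient G_i/P. If N is a finitely generated full normal subgroup of G = G₁ × ⋯ × Gₙ (full meaning N ∩ G_i ≠ 1 for every i), then G/N is virtually abelian. -/
/-- A group is virtually cyclic if it has a cyclic subgroup of finite index. -/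
def VirtuallyCyclic (Q : Type*) [Group Q] : Prop :=
  ∃ H : Subgroup Q, H.FiniteIndex ∧ IsCyclic H

/-- A group is virtually abelian if it has an abelian subgroup of finite index. -/
def VirtuallyAbelian (Q : Type*) [Group Q] : Prop :=
  ∃ H : Subgroup Q, H.FiniteIndex ∧ ∀ a b : H, a * b = b * a

/-!
Let `Pᵢ` be the projection of `N` to `Gᵢ`; it is a nontrivial finitely generated normal subgroup
(nontrivial because `N` is full), so `Gᵢ ⧸ Pᵢ` has a cyclic subgroup `Cᵢ` of finite index.
For `x ∈ N` and `g ∈ Gᵢ` the commutator `⁅g, x⁆` lies in `N ∩ Gᵢ` and equals `⁅g, xᵢ⁆`, so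
`⁅Gᵢ, Pᵢ⁆ ≤ N`. Modulo `⁅Gᵢ, Pᵢ⁆` the subgroup `Pᵢ` is central, and a central extension of a
cyclic group is abelian; hence any two elements of the preimage `Aᵢ` of `Cᵢ` commute modulo
`⁅Gᵢ, Pᵢ⁆ ≤ N`. Thus `∏ Aᵢ` has finite index and its image in `G ⧸ N` is abelian.
-/

open scoped commutatorElement

open Subgroup

theorem Subgroup.FG.map {G H : Type*} [Group G] [Group H] {P : Subgroup G} (hP : P.FG)
    (f : G →* H) : (P.map f).FG := by
  rw [fg_iff_submonoid_fg] at hP ⊢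
  exact hP.map f

theorem Subgroup.finiteIndex_comap_of_surjective {G G' : Type*} [Group G] [Group G']
    (H : Subgroup G) [H.FiniteIndex] {f : G' →* G} (hf : Function.Surjective f) :
    (H.comap f).FiniteIndex :=
  ⟨by rw [index_comap_of_surjective H hf]; exact FiniteIndex.index_ne_zero⟩

theorem MonoidHom.commute_of_ker_le_center_of_mem_cyclic {G Q : Type*} [Group G] [Group Q]
    (f : G →* Q) (hf : f.ker ≤ center G) (C : Subgroup Q) [IsCyclic C] {x y : G}
    (hx : f x ∈ C) (hy : f y ∈ C) : Commute x y := by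
  have hg : (f.subgroupComap C).ker ≤ center (C.comap f) := fun z hz => by
    rw [mem_center_iff]
    intro w
    exact Subtype.ext (mem_center_iff.mp (hf (congrArg Subtype.val hz)) w)
  have := (f.subgroupComap C).isMulCommutative_of_isCyclic_of_ker_le_center hg
  exact congrArg Subtype.val (this.is_comm.comm ⟨x, hx⟩ ⟨y, hy⟩)

theorem QuotientGroup.ker_map_commutator_top_le_center {G : Type*} [Group G] (P : Subgroup G)
    [P.Normal] :
    (QuotientGroup.map ⁅(⊤ : Subgroup G), P⁆ P (MonoidHom.id G)
      (commutator_le_right ⊤ P)).ker ≤ center (G ⧸ ⁅(⊤ : Subgroup G), P⁆) := by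
  intro u hu
  induction u using QuotientGroup.induction_on with | H x => ?_
  have hx : x ∈ P := (QuotientGroup.eq_one_iff x).mp hu
  rw [mem_center_iff]
  intro w
  induction w using QuotientGroup.induction_on with | H g => ?_
  rw [← QuotientGroup.mk'_apply, ← QuotientGroup.mk'_apply,
    ← commutatorElement_eq_one_iff_mul_comm, ← map_commutatorElement, QuotientGroup.mk'_apply,
    QuotientGroup.eq_one_iff]
  exact commutator_mem_commutator (mem_top g) hx

theorem commutatorElement_mem_commutator_top_of_mk_mem_cyclic {G : Type*} [Group G]
    (P : Subgroup G) [P.Normal] (C : Subgroup (G ⧸ P)) [IsCyclic C] {a b : G}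
    (ha : (a : G ⧸ P) ∈ C) (hb : (b : G ⧸ P) ∈ C) : ⁅a, b⁆ ∈ ⁅(⊤ : Subgroup G), P⁆ := by
  have hab := MonoidHom.commute_of_ker_le_center_of_mem_cyclic _
    (QuotientGroup.ker_map_commutator_top_le_center P) C
    (x := QuotientGroup.mk' _ a) (y := QuotientGroup.mk' _ b) ha hb
  rwa [Commute, SemiconjBy, ← commutatorElement_eq_one_iff_mul_comm, ← map_commutatorElement,
    QuotientGroup.mk'_apply, QuotientGroup.eq_one_iff] at hab

section Pi

variable {ι : Type*} {G : ι → Type*} [∀ i, Group (G i)]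

theorem Pi.commutatorElement_mulSingle_left [DecidableEq ι] (i : ι) (g : G i) (x : ∀ i, G i) :
    ⁅Pi.mulSingle i g, x⁆ = Pi.mulSingle i ⁅g, x i⁆ := by
  funext j
  rcases eq_or_ne j i with rfl | hj
  · simp [commutatorElement_def]
  · simp [commutatorElement_def, Pi.mulSingle_eq_of_ne hj]

theorem Subgroup.commutator_top_map_eval_le_comap_mulSingle [DecidableEq ι]
    (N : Subgroup (∀ i, G i)) [N.Normal] (i : ι) :
    ⁅(⊤ : Subgroup (G i)), N.map (Pi.evalMonoidHom G i)⁆ ≤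
      N.comap (MonoidHom.mulSingle G i) := by
  rw [commutator_le]
  rintro g - _ ⟨x, hx, rfl⟩
  rw [mem_comap, MonoidHom.mulSingle_apply, Pi.evalMonoidHom_apply,
    ← Pi.commutatorElement_mulSingle_left, commutatorElement_def]
  exact mul_mem (Normal.conj_mem ‹_› x hx _) (inv_mem hx)

theorem Subgroup.commutatorElement_mem_of_forall_mem_commutator_top_map_eval [Finite ι]
    (N : Subgroup (∀ i, G i)) [N.Normal] {a b : ∀ i, G i}
    (h : ∀ i, ⁅a i, b i⁆ ∈ ⁅(⊤ : Subgroup (G i)), N.map (Pi.evalMonoidHom G i)⁆) :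
    ⁅a, b⁆ ∈ N := by
  classical
  exact pi_mem_of_mulSingle_mem _ fun i =>
    commutator_top_map_eval_le_comap_mulSingle N i (h i)

theorem Subgroup.map_evalMonoidHom_ne_bot [DecidableEq ι] {N : Subgroup (∀ i, G i)} {i : ι}
    (hN : N ⊓ (MonoidHom.mulSingle G i).range ≠ ⊥) : N.map (Pi.evalMonoidHom G i) ≠ ⊥ := by
  contrapose! hN
  rw [eq_bot_iff_forall]
  rintro _ ⟨hx, y, rfl⟩
  have hy : y ∈ N.map (Pi.evalMonoidHom G i) := ⟨_, hx, by simp⟩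
  rw [hN, mem_bot] at hy
  simp [hy]

end Pi

theorem virtuallyAbelian_quotient_of_commutator_le {G : Type*} [Group G] (N : Subgroup G)
    [N.Normal] (K : Subgroup G) [K.FiniteIndex] (hK : ⁅K, K⁆ ≤ N) :
    VirtuallyAbelian (G ⧸ N) := by
  refine ⟨K.map (QuotientGroup.mk' N),
    ⟨ne_zero_of_dvd_ne_zero FiniteIndex.index_ne_zero
      (K.index_map_dvd (QuotientGroup.mk'_surjective N))⟩, ?_⟩
  rintro ⟨_, a, ha, rfl⟩ ⟨_, b, hb, rfl⟩
  refine Subtype.ext ?_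
  change QuotientGroup.mk' N a * QuotientGroup.mk' N b =
    QuotientGroup.mk' N b * QuotientGroup.mk' N a
  rw [← commutatorElement_eq_one_iff_mul_comm, ← map_commutatorElement,
    QuotientGroup.mk'_apply, QuotientGroup.eq_one_iff]
  exact hK (commutator_mem_commutator ha hb)

theorem quotient_virtuallyAbelian_of_fg_full_normal_general {n : ℕ}
    (G : Fin n → Type*) [∀ i, Group (G i)]
    (hquot : ∀ (i : Fin n) (P : Subgroup (G i)) [P.Normal],
      P ≠ ⊥ → P.FG → VirtuallyCyclic (G i ⧸ P))
    (N : Subgroup (∀ i, G i)) [N.Normal] (hNfg : N.FG)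
    (hNfull : ∀ i, N ⊓ (MonoidHom.mulSingle G i).range ≠ ⊥) :
    VirtuallyAbelian ((∀ i, G i) ⧸ N) := by
  let P i := N.map (Pi.evalMonoidHom G i)
  have hsurj i : Function.Surjective (Pi.evalMonoidHom G i) := Function.surjective_eval i
  have (i : Fin n) : (P i).Normal := Normal.map ‹_› _ (hsurj i)
  choose C hCfin hCcyc using fun i =>
    hquot i (P i) (map_evalMonoidHom_ne_bot (hNfull i)) (hNfg.map _)
  let K := ⨅ i, (C i).comap ((QuotientGroup.mk' (P i)).comp (Pi.evalMonoidHom G i))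
  have : K.FiniteIndex := finiteIndex_iInf fun i =>
    finiteIndex_comap_of_surjective _ ((QuotientGroup.mk'_surjective _).comp (hsurj i))
  refine virtuallyAbelian_quotient_of_commutator_le N K (commutator_le.mpr fun a ha b hb => ?_)
  simp only [K, mem_iInf, mem_comap] at ha hb
  exact commutatorElement_mem_of_forall_mem_commutator_top_map_eval N fun i =>
    commutatorElement_mem_commutator_top_of_mk_mem_cyclic (P i) (C i) (ha i) (hb i)

/-- Let `G₁, …, Gₙ` be finitely generated groups such that every
nontrivial finitely generated normal subgroup `P ≤ Gᵢ` has virtually cyclic quotient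
`Gᵢ ⧸ P`. If `N` is a finitely generated full normal subgroup of `G₁ × ⋯ × Gₙ`, then
`(G₁ × ⋯ × Gₙ) ⧸ N` is virtually abelian. -/
theorem quotient_virtuallyAbelian_of_fg_full_normal {n : ℕ} (hn : 2 ≤ n)
    (G : Fin n → Type*) [∀ i, Group (G i)] [∀ i, Group.FG (G i)]
    (hquot : ∀ (i : Fin n) (P : Subgroup (G i)) [P.Normal],
      P ≠ ⊥ → P.FG → VirtuallyCyclic (G i ⧸ P))
    (N : Subgroup (∀ i, G i)) [N.Normal] (hNfg : N.FG)
    (hNfull : ∀ i, N ⊓ (MonoidHom.mulSingle G i).range ≠ ⊥) :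
    VirtuallyAbelian ((∀ i, G i) ⧸ N) :=
  quotient_virtuallyAbelian_of_fg_full_normal_general G hquot N hNfg hNfull
end

section
/- Let G be a group, L a normal subgroup of G, and S a subgroup with L ≤ S ≤ G. If G/L is virtually nilpotent, then there exist k ∈ ℕ and subgroups M₀ ≤ M₁ ≤ ⋯ ≤ M_k of G such that M₀ has finite index in S, M_k has finite index in G, each M_j is normal in M_{j+1}, and each quotient M_{j+1}/M_j is abelian (equivalently, ⁅M_{j+1}, M_{j+1}⁆ ≤ M_j for all j < k). -/
/-!
Let `H` be a nilpotent subgroup of finite index in `G ⧸ L`, with lower central series `γ`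
ending at `γ c = ⊥`. Since `γ i` is central modulo `γ (i + 1)`, for every subgroup `A` of `H`
the subgroups `A ⊔ γ (c - j)` climb from `A` to `H` with abelian factors. Take for `A` the image
of `S` in `H` and pull the series back to `G`: as `L ≤ S`, it starts at `S ⊓ π⁻¹(H)`, which has
finite index in `S`, and it ends at `π⁻¹(H)`, which has finite index in `G`.
-/

/-- A group is virtually nilpotent if it has a nilpotent subgroup of finite index. -/
def VirtuallyNilpotent (Q : Type*) [Group Q] : Prop :=
  ∃ H : Subgroup Q, H.FiniteIndex ∧ Group.IsNilpotent H

open scoped commutatorElement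

namespace Subgroup

variable {G G' : Type*} [Group G] [Group G']

def IsAbelianSeries (M : ℕ → Subgroup G) (k : ℕ) : Prop :=
  ∀ j < k, M j ≤ M (j + 1) ∧ ⁅M (j + 1), M (j + 1)⁆ ≤ M j

theorem IsAbelianSeries.map {M : ℕ → Subgroup G} {k : ℕ} (hM : IsAbelianSeries M k)
    (f : G →* G') : IsAbelianSeries (fun j ↦ (M j).map f) k := fun j hj ↦
  ⟨map_mono (hM j hj).1, by rw [← map_commutator]; exact map_mono (hM j hj).2⟩

theorem IsAbelianSeries.comap {M : ℕ → Subgroup G} {k : ℕ} (hM : IsAbelianSeries M k)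
    (f : G' →* G) : IsAbelianSeries (fun j ↦ (M j).comap f) k := fun j hj ↦
  ⟨comap_mono (hM j hj).1, by
    rw [← map_le_iff_le_comap, map_commutator]
    exact (commutator_mono (map_comap_le f _) (map_comap_le f _)).trans (hM j hj).2⟩

theorem commutatorElement_mul_mem_center {a b z w : G} (hz : z ∈ center G) (hw : w ∈ center G) :
    ⁅a * z, b * w⁆ = ⁅a, b⁆ := by
  have hzb : Commute z b := (mem_center_iff.mp hz b).symm
  have hwa : Commute w a := (mem_center_iff.mp hw a).symm
  have hwz : w * z = z * w := mem_center_iff.mp hz w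
  calc ⁅a * z, b * w⁆ = a * z * (b * w) * (b * w * (a * z))⁻¹ := by
        rw [commutatorElement_def]; group
    _ = a * b * (z * w) * (b * a * (z * w))⁻¹ := by
        rw [hzb.mul_mul_mul_comm, hwa.mul_mul_mul_comm, hwz]
    _ = ⁅a, b⁆ := by rw [commutatorElement_def]; group

theorem commutator_sup_center_le (H : Subgroup G) : ⁅H ⊔ center G, H ⊔ center G⁆ ≤ H := by
  rw [commutator_le]
  intro x hx y hy
  obtain ⟨a, ha, z, hz, rfl⟩ := mem_sup_of_normal_right.mp hx
  obtain ⟨b, hb, w, hw, rfl⟩ := mem_sup_of_normal_right.mp hy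
  rw [commutatorElement_mul_mem_center hz hw]
  exact H.commutator_le_self (commutator_mem_commutator ha hb)

theorem map_mk'_le_center_of_commutator_top_le {H N : Subgroup G} [N.Normal]
    (h : ⁅H, ⊤⁆ ≤ N) : H.map (QuotientGroup.mk' N) ≤ center (G ⧸ N) := by
  rwa [← commutator_top_right_eq_bot_iff_le_center,
    ← map_top_of_surjective _ (QuotientGroup.mk'_surjective N), ← map_commutator, map_eq_bot_iff,
    QuotientGroup.ker_mk']

theorem commutator_sup_le_sup_of_commutator_top_le (A : Subgroup G) {H N : Subgroup G} [N.Normal]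
    (h : ⁅H, ⊤⁆ ≤ N) : ⁅A ⊔ H, A ⊔ H⁆ ≤ A ⊔ N := by
  have hAH := sup_le_sup_left (map_mk'_le_center_of_commutator_top_le h)
    (A.map (QuotientGroup.mk' N))
  rw [← QuotientGroup.ker_mk' N, ← comap_map_eq, ← map_le_iff_le_comap, map_commutator, map_sup]
  exact (commutator_mono hAH hAH).trans (commutator_sup_center_le _)

theorem exists_isAbelianSeries_of_isNilpotent [Group.IsNilpotent G] (A : Subgroup G) :
    ∃ (c : ℕ) (M : ℕ → Subgroup G), M 0 = A ∧ M c = ⊤ ∧ IsAbelianSeries M c := by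
  obtain ⟨c, hc⟩ := nilpotent_iff_lowerCentralSeries.mp ‹Group.IsNilpotent G›
  refine ⟨c, fun j ↦ A ⊔ (⊤ : Subgroup G).lowerCentralSeries (c - j), by simp [hc], by simp,
    fun j hj ↦ ⟨sup_le_sup_left (lowerCentralSeries_antitone _ (by omega)) A, ?_⟩⟩
  dsimp only
  rw [show c - j = c - (j + 1) + 1 by omega]
  exact commutator_sup_le_sup_of_commutator_top_le A le_rfl

end Subgroup

open Subgroup

/-- Let `L ⊴ G` and `L ≤ S ≤ G`. If `G ⧸ L` is virtually nilpotent, then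
there are `k` and subgroups `M 0 ≤ M 1 ≤ ⋯ ≤ M k` of `G` such that `M 0` has finite index
in `S`, `M k` has finite index in `G`, and each `M j` is normal in `M (j+1)` with abelian
quotient, i.e. `⁅M (j+1), M (j+1)⁆ ≤ M j` for all `j < k`. -/
theorem subnormal_series_of_virtuallyNilpotent_quotient {G : Type*} [Group G]
    (L : Subgroup G) [L.Normal] (S : Subgroup G) (hLS : L ≤ S)
    (h : VirtuallyNilpotent (G ⧸ L)) :
    ∃ (k : ℕ) (M : ℕ → Subgroup G),
      M 0 ≤ S ∧ (M 0).relIndex S ≠ 0 ∧ (M k).index ≠ 0 ∧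
      ∀ j < k, M j ≤ M (j + 1) ∧ ⁅M (j + 1), M (j + 1)⁆ ≤ M j := by
  obtain ⟨H, hH, hHnil⟩ := h
  let π := QuotientGroup.mk' L
  obtain ⟨c, M, hM0, hMc, hM⟩ := exists_isAbelianSeries_of_isNilpotent ((S.map π).subgroupOf H)
  have hP : (H.comap π).FiniteIndex := by
    rw [finiteIndex_iff, index_comap_of_surjective _ (QuotientGroup.mk'_surjective L)]
    exact hH.index_ne_zero
  have hbottom : ((M 0).map H.subtype).comap π = S ⊓ H.comap π := by
    rw [hM0, subgroupOf_map_subtype, comap_inf, comap_map_eq, QuotientGroup.ker_mk',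
      sup_eq_left.mpr hLS]
  refine ⟨c, fun j ↦ ((M j).map H.subtype).comap π, ?_, ?_, ?_, (hM.map _).comap _⟩
  · simp only [hbottom, inf_le_left]
  · simp only [hbottom, inf_comm S, inf_relIndex_right]
    exact FiniteIndex.index_ne_zero (H := (H.comap π).subgroupOf S)
  · simpa only [hMc, ← MonoidHom.range_eq_map, range_subtype] using hP.index_ne_zero
end

section
/- Every finitely generated group whose commutator subgroup is finite is virtually abelian; that is, if G is finitely generated and ⁅G,G⁆ is a finite subgroup, then G has an abelian subgroup of finite index. -/
theorem VirtuallyAbelian.of_finiteIndex {G : Type*} [Group G] (H : Subgroup G) [H.FiniteIndex]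
    [IsMulCommutative H] : VirtuallyAbelian G :=
  ⟨H, inferInstance, fun a b => Std.Commutative.comm a b⟩

theorem commutatorSet_subset_commutator (G : Type*) [Group G] :
    commutatorSet G ⊆ commutator G := by
  rw [commutator_eq_closure]
  exact Subgroup.subset_closure

/-- A finitely generated group with finite commutator subgroup is
virtually abelian. -/
theorem virtuallyAbelian_of_finite_commutator {G : Type*} [Group G] [Group.FG G]
    (h : Finite (commutator G)) :
    VirtuallyAbelian G := by
  have : Finite (commutatorSet G) := Finite.Set.subset _ (commutatorSet_subset_commutator G)
  -- `Subgroup.finiteIndex_center`: modulo the center, an element is determined by its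
  -- commutators with a finite generating set, of which there are finitely many choices.
  exact .of_finiteIndex (Subgroup.center G)
end
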